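/- arXiv:2101.00247 — 2 statements merged into one kernel-verified Lean document; each statement's English description precedes it below -/
import Mathlib

section
/- Let G be a finite group, R a normal subgroup of G, and 𝔉 a class of finite groups closed under taking homomorphic images. Suppose that for every prime p dividing |G|, every Sylow p-subgroup P of G, and every maximal subgroup V of P, there exists a subgroup T ∈ 𝔉 of G with VT = G. Then the quotient G/R has the same property: for every prime p dividing |G/R|, every Sylow p-subgroup P̄ of G/R, and every maximal subgroup V̄ of P̄, there exists a subgroup T̄ of G/R with V̄T̄ = G/R and T̄ ∈ 𝔉; indeed one may take T̄ = TR/R for a suitable member T ∈ 𝔉 of the original family. -/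
open scoped Pointwise

/-- If `𝔉` is a class of groups closed under homomorphic images and every maximal
subgroup of every Sylow subgroup of the finite group `G` has a supplement in `G`
belonging to `𝔉`, then the same property holds in `G/R` for every normal subgroup
`R` of `G`; indeed the supplement in `G/R` may be taken of the form `TR/R` (the
image of `T` in `G/R`) for a suitable member `T ∈ 𝔉` of the original family. -/
theorem supplement_hypothesis_quotient {G : Type u} [Group G] [Finite G]
    (R : Subgroup G) [R.Normal]
    (𝔉 : (H : Type u) → [inst : Group H] → Prop)
    (h𝔉 : ∀ (H K : Type u) [Group H] [Group K] (f : H →* K),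
      Function.Surjective f → 𝔉 H → 𝔉 K)
    (hsupp : ∀ p : ℕ, p.Prime → p ∣ Nat.card G →
      ∀ (P : Sylow p G) (V : Subgroup G), V < ↑P →
        (∀ W : Subgroup G, V < W → W ≤ ↑P → W = ↑P) →
        ∃ T : Subgroup G, (V : Set G) * (T : Set G) = Set.univ ∧ 𝔉 ↥T) :
    ∀ p : ℕ, p.Prime → p ∣ Nat.card (G ⧸ R) →
      ∀ (P' : Sylow p (G ⧸ R)) (V' : Subgroup (G ⧸ R)), V' < ↑P' →
        (∀ W : Subgroup (G ⧸ R), V' < W → W ≤ ↑P' → W = ↑P') →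
        ∃ T : Subgroup G, 𝔉 ↥T ∧
          (V' : Set (G ⧸ R)) * ((T.map (QuotientGroup.mk' R)) : Set (G ⧸ R)) = Set.univ ∧
          𝔉 ↥(T.map (QuotientGroup.mk' R)) := by
  intro p hp hpdvd P' V' hV'lt hV'max
  haveI : Fact p.Prime := ⟨hp⟩
  set π : G →* G ⧸ R := QuotientGroup.mk' R with hπ
  have hπsurj : Function.Surjective π := QuotientGroup.mk'_surjective R
  -- p divides |G|
  have hpG : p ∣ Nat.card G := by
    have := Subgroup.card_eq_card_quotient_mul_card_subgroup R
    exact this ▸ Dvd.dvd.mul_right hpdvd _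
  -- lift the Sylow subgroup
  obtain ⟨P, hP⟩ := Sylow.mapSurjective_surjective hπsurj p P'
  have hPmap : (P : Subgroup G).map π = (P' : Subgroup (G ⧸ R)) := by
    rw [← hP]; rfl
  -- the preimage of V' inside P
  set V : Subgroup G := (V'.comap π) ⊓ P with hV
  have hVle : V ≤ (P : Subgroup G) := inf_le_right
  have hVmap : V.map π = V' := by
    apply le_antisymm
    · rintro _ ⟨x, ⟨hx1, _⟩, rfl⟩
      exact hx1
    · intro v' hv'
      have hv'P : v' ∈ (P : Subgroup G).map π := hPmap ▸ (hV'lt.le hv')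
      obtain ⟨x, hxP, rfl⟩ := hv'P
      exact ⟨x, ⟨hv', hxP⟩, rfl⟩
  have hRP : R ⊓ (P : Subgroup G) ≤ V := by
    intro x ⟨hxR, hxP⟩
    refine ⟨?_, hxP⟩
    have : π x = 1 := (QuotientGroup.eq_one_iff x).2 hxR
    simpa [Subgroup.mem_comap, this] using V'.one_mem
  have hVlt : V < (P : Subgroup G) := by
    refine lt_of_le_of_ne hVle ?_
    intro h
    apply hV'lt.ne
    rw [← hVmap, h, hPmap]
  have hVmaxmal : ∀ W : Subgroup G, V < W → W ≤ (P : Subgroup G) → W = (P : Subgroup G) := by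
    intro W hVW hWP
    have hmaple : V' ≤ W.map π := hVmap ▸ Subgroup.map_mono hVW.le
    have hmaplt : V' < W.map π := by
      refine lt_of_le_of_ne hmaple ?_
      intro h
      apply hVW.not_ge
      intro w hw
      exact ⟨h ▸ ⟨w, hw, rfl⟩, hWP hw⟩
    have hWmap : W.map π = (P' : Subgroup (G ⧸ R)) :=
      hV'max _ hmaplt (hPmap ▸ Subgroup.map_mono hWP)
    -- now W = P
    apply le_antisymm hWP
    intro x hxP
    have : π x ∈ W.map π := by
      rw [hWmap, ← hPmap]; exact ⟨x, hxP, rfl⟩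
    obtain ⟨w, hw, hwx⟩ := this
    have hxw : x * w⁻¹ ∈ R := by
      have h1 : π (x * w⁻¹) = 1 := by
        rw [map_mul, map_inv, hwx, mul_inv_cancel]
      exact (QuotientGroup.eq_one_iff _).1 h1
    have hwP : w ∈ (P : Subgroup G) := hWP hw
    have hxP' : x ∈ (P : Subgroup G) := hxP
    have : x * w⁻¹ ∈ V := hRP (Subgroup.mem_inf.2 ⟨hxw, mul_mem hxP' (inv_mem hwP)⟩)
    have : x * w⁻¹ ∈ W := hVW.le this
    simpa using mul_mem this hw
  obtain ⟨T, hTsupp, hT𝔉⟩ := hsupp p hp hpG P V hVlt hVmaxmal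
  refine ⟨T, hT𝔉, ?_, ?_⟩
  · apply Set.eq_univ_of_forall
    intro g'
    obtain ⟨g, rfl⟩ := hπsurj g'
    have hg : g ∈ (V : Set G) * (T : Set G) := hTsupp ▸ Set.mem_univ g
    obtain ⟨v, hv, t, ht, rfl⟩ := hg
    exact ⟨π v, hVmap ▸ ⟨v, hv, rfl⟩, π t, ⟨t, ht, rfl⟩, (map_mul π v t).symm⟩
  · exact h𝔉 _ _ (π.subgroupMap T) (π.subgroupMap_surjective T) hT𝔉
end

section
/- Let G be a finite group and σ a partition of the set of all primes such that exactly two classes σ_1, σ_2 of σ meet π(G), and set π = σ_1 ∩ π(G). Suppose that for every prime p dividing |G|, every Sylow p-subgroup P of G, and every maximal subgroup V of P, there exists a σ-soluble subgroup T of G with VT = G. Then G possesses a Hall π-subgroup, a Hall π'-subgroup, a Hall (π ∪ {p})-subgroup for every prime p ∈ σ_2 ∩ π(G), and a Hall (π' ∪ {q})-subgroup for every prime q ∈ π. -/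
/-!
Every set `ρ` in question has the property that each class `σ i` meets `π(G)` either inside `ρ`
or in at most one prime of `ρ`. Hence a normal series of a `σ`-soluble group with `σ`-primary
factors has factors whose orders are `ρ`-numbers or have at most one prime divisor in `ρ`, and
such a group has a Hall `ρ`-subgroup. If `|G|` is not a `ρ`-number, take a prime `r ∉ ρ`, a
maximal subgroup `V` of a Sylow `r`-subgroup and a `σ`-soluble supplement `T` of `V`. Then
`|G : T| = |V : V ∩ T|` is a power of `r`, so a Hall `ρ`-subgroup of `T` is one of `G`.
-/

open scoped Pointwise

/-- `σ` is a partition of the set of all primes: each class is nonempty, the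
classes are pairwise disjoint, and their union is the set of all primes. -/
def SigmaPartition {ι : Type*} (σ : ι → Set ℕ) : Prop :=
  (∀ i, (σ i).Nonempty) ∧ (Pairwise fun i j => Disjoint (σ i) (σ j)) ∧
    (⋃ i, σ i) = {p : ℕ | p.Prime}

/-- A group is `σ`-primary if all primes dividing its order lie in a single class `σ i`. -/
def SigmaPrimary {ι : Type*} (σ : ι → Set ℕ) (G : Type*) [Group G] : Prop :=
  ∃ i, ∀ p : ℕ, p.Prime → p ∣ Nat.card G → p ∈ σ i

/-- A group is `σ`-soluble if it has a normal series all of whose factors are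
`σ`-primary (the order of the factor `c k.succ / c k.castSucc` is the index
`((c k.castSucc).subgroupOf (c k.succ)).index`). -/
def SigmaSoluble {ι : Type*} (σ : ι → Set ℕ) (G : Type*) [Group G] : Prop :=
  ∃ (n : ℕ) (c : Fin (n + 1) → Subgroup G),
    c 0 = ⊥ ∧ c (Fin.last n) = ⊤ ∧ Monotone c ∧ (∀ k, (c k).Normal) ∧
    ∀ k : Fin n, ∃ i, ∀ p : ℕ, p.Prime →
      p ∣ ((c k.castSucc).subgroupOf (c k.succ)).index → p ∈ σ i

/-- A group is `σ`-nilpotent if it is the (internal) direct product of finitely many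
`σ`-primary (normal) subgroups. -/
def SigmaNilpotent {ι : Type*} (σ : ι → Set ℕ) (G : Type*) [Group G] : Prop :=
  ∃ (n : ℕ) (H : Fin n → Subgroup G),
    (∀ k, (H k).Normal) ∧ iSupIndep H ∧ (⨆ k, H k) = ⊤ ∧
    ∀ k, ∃ i, ∀ p : ℕ, p.Prime → p ∣ Nat.card (H k) → p ∈ σ i

/-- A Hall `ρ`-subgroup: all primes dividing its order lie in `ρ`, and no prime
dividing its index lies in `ρ`. -/
def IsHallSubgroup {G : Type*} [Group G] (ρ : Set ℕ) (H : Subgroup G) : Prop :=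
  (∀ p : ℕ, p.Prime → p ∣ Nat.card H → p ∈ ρ) ∧
  (∀ p : ℕ, p.Prime → p ∣ H.index → p ∉ ρ)

/-- A Hall `σ i`-subgroup of `G`. -/
def IsHallSigmaSubgroup {ι : Type*} (σ : ι → Set ℕ) {G : Type*} [Group G]
    (i : ι) (H : Subgroup G) : Prop :=
  IsHallSubgroup (σ i) H

/-- A complete Hall `σ`-set of `G`: every nontrivial member is a Hall
`σ i`-subgroup for some `i`, and for every `i` with `σ i ∩ π(G) ≠ ∅` the set
contains exactly one Hall `σ i`-subgroup of `G`. -/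
def CompleteHallSigmaSet {ι : Type*} (σ : ι → Set ℕ) (G : Type*) [Group G]
    (ℋ : Set (Subgroup G)) : Prop :=
  (∀ H ∈ ℋ, H ≠ ⊥ → ∃ i, IsHallSigmaSubgroup σ i H) ∧
  ∀ i, (∃ p : ℕ, p.Prime ∧ p ∈ σ i ∧ p ∣ Nat.card G) →
    ∃! H : Subgroup G, H ∈ ℋ ∧ IsHallSigmaSubgroup σ i H

/-- A subgroup `A` is `σ`-permutable in `G` if `G` has a complete Hall `σ`-set `ℋ`
with `A Hˣ = Hˣ A` for all `H ∈ ℋ` and all `x ∈ G`. -/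
def SigmaPermutable {ι : Type*} (σ : ι → Set ℕ) {G : Type*} [Group G]
    (A : Subgroup G) : Prop :=
  ∃ ℋ : Set (Subgroup G), CompleteHallSigmaSet σ G ℋ ∧
    ∀ H ∈ ℋ, ∀ x : G,
      (A : Set G) * (H.map (MulAut.conj x).toMonoidHom : Set G) =
        (H.map (MulAut.conj x).toMonoidHom : Set G) * (A : Set G)

/-- `G` is a `PσT`-group: `σ`-permutability is transitive, i.e. if `H` is
`σ`-permutable in `G` and `K` is `σ`-permutable in `H`, then `K` is
`σ`-permutable in `G`. -/
def IsPSigmaT {ι : Type*} (σ : ι → Set ℕ) (G : Type*) [Group G] : Prop :=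
  ∀ H : Subgroup G, SigmaPermutable σ H →
    ∀ K : Subgroup ↥H, SigmaPermutable σ K →
      SigmaPermutable σ (K.map H.subtype)

open Subgroup

def IsPiNumber (ρ : Set ℕ) (n : ℕ) : Prop :=
  ∀ p : ℕ, p.Prime → p ∣ n → p ∈ ρ

def IsPiNumberOrHasAtMostOnePiPrime (ρ : Set ℕ) (n : ℕ) : Prop :=
  IsPiNumber ρ n ∨ {p : ℕ | p.Prime ∧ p ∣ n ∧ p ∈ ρ}.Subsingleton

section PiNumber

variable {ρ S : Set ℕ} {m n : ℕ}

theorem IsPiNumber.of_dvd (hn : IsPiNumber ρ n) (hmn : m ∣ n) : IsPiNumber ρ m :=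
  fun p hp hpm => hn p hp (hpm.trans hmn)

theorem IsPiNumber.mul (hm : IsPiNumber ρ m) (hn : IsPiNumber ρ n) : IsPiNumber ρ (m * n) :=
  fun p hp hpmn => (hp.dvd_mul.mp hpmn).elim (hm p hp) (hn p hp)

theorem isPiNumber_one : IsPiNumber ρ 1 :=
  fun _ hp hp1 => absurd (Nat.dvd_one.mp hp1) hp.ne_one

theorem IsPiNumber.coprime_of_compl (hm : IsPiNumber ρ m) (hn : IsPiNumber ρᶜ n) :
    n.Coprime m :=
  Nat.coprime_of_dvd fun p hp hpn hpm => hn p hp hpn (hm p hp hpm)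

theorem IsPiNumberOrHasAtMostOnePiPrime.of_dvd (hn : IsPiNumberOrHasAtMostOnePiPrime ρ n)
    (hmn : m ∣ n) : IsPiNumberOrHasAtMostOnePiPrime ρ m :=
  hn.imp (·.of_dvd hmn) fun h => h.anti fun _ ⟨hp, hpm, hpρ⟩ => ⟨hp, hpm.trans hmn, hpρ⟩

theorem IsPiNumber.isPiNumberOrHasAtMostOnePiPrime (hm : IsPiNumber S m)
    (hS : S ⊆ ρ ∨ (S ∩ ρ).Subsingleton) : IsPiNumberOrHasAtMostOnePiPrime ρ m :=
  hS.imp (fun h p hp hpm => h (hm p hp hpm))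
    fun h => h.anti fun p ⟨hp, hpm, hpρ⟩ => ⟨hm p hp hpm, hpρ⟩

theorem IsPGroup.isPiNumber_card {p : ℕ} [Fact p.Prime] {P : Type*} [Group P] [Finite P]
    (hP : IsPGroup p P) (hpρ : p ∈ ρ) : IsPiNumber ρ (Nat.card P) := by
  obtain ⟨k, hk⟩ := IsPGroup.iff_card.mp hP
  intro r hr hrP
  rw [hk] at hrP
  rwa [(Nat.prime_dvd_prime_iff_eq hr Fact.out).mp (hr.dvd_of_dvd_pow hrP)]

end PiNumber

section Index

variable {G : Type*} [Group G]

theorem Subgroup.relIndex_dvd_relIndex_of_le_of_normal (A : Subgroup G) [A.Normal]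
    {K L : Subgroup G} (hKL : K ≤ L) : A.relIndex K ∣ A.relIndex L := by
  rw [← relIndex_subgroupOf hKL]
  exact relIndex_dvd_index_of_normal _ _

theorem Subgroup.relIndex_map_dvd {H : Type*} [Group H] (f : G →* H) (A B : Subgroup G) :
    (A.map f).relIndex (B.map f) ∣ A.relIndex B := by
  rw [relIndex, relIndex, ← index_comap_of_surjective _ (f.subgroupMap_surjective B)]
  exact index_dvd_of_le fun x hx => ⟨x, hx, rfl⟩

theorem Subgroup.index_eq_relIndex_of_sup_eq_top {M N : Subgroup G} [N.Normal] [N.FiniteIndex]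
    (h : M ⊔ N = ⊤) : M.index = M.relIndex N := by
  have hMN := relIndex_inf_mul_relIndex M N ⊤
  rw [inf_top_eq, relIndex_top_right, relIndex_top_right] at hMN
  rw [← relIndex_mul_index (inf_le_left : M ⊓ N ≤ M), inf_relIndex_left,
    ← relIndex_sup_right M N, h, relIndex_top_right, mul_comm] at hMN
  exact Nat.eq_of_mul_eq_mul_left (Nat.pos_of_ne_zero FiniteIndex.index_ne_zero) hMN.symm

theorem Subgroup.index_eq_relIndex_of_mul_eq_univ {V T : Subgroup G}
    (h : (V : Set G) * (T : Set G) = Set.univ) : T.index = T.relIndex V := by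
  have hstab : MulAction.stabilizer V ((1 : G) : G ⧸ T) = T.subgroupOf V := by
    ext v
    change (v : G) • ((1 : G) : G ⧸ T) = _ ↔ _
    rw [MulAction.Quotient.smul_mk, smul_eq_mul, mul_one, QuotientGroup.eq, mul_one,
      inv_mem_iff, mem_subgroupOf]
  have horbit : MulAction.orbit V ((1 : G) : G ⧸ T) = Set.univ := by
    refine Set.eq_univ_of_forall fun x => ?_
    induction x using QuotientGroup.induction_on with | H g => ?_
    obtain ⟨v, hv, t, ht, rfl⟩ := h.symm ▸ Set.mem_univ g
    refine ⟨⟨v, hv⟩, ?_⟩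
    change (v : G) • ((1 : G) : G ⧸ T) = _
    rw [MulAction.Quotient.smul_mk, smul_eq_mul, mul_one, QuotientGroup.eq, inv_mul_cancel_left]
    exact ht
  rw [relIndex, ← hstab, MulAction.index_stabilizer, horbit, Set.ncard_univ, index]

theorem Sylow.index_normalizer_map_dvd_index {p : ℕ} [Fact p.Prime] [Finite G]
    {N : Subgroup G} [N.Normal] (P : Sylow p N) :
    (normalizer (P.map N.subtype : Set G)).index ∣ (P : Subgroup N).index :=
  calc (normalizer (P.map N.subtype : Set G)).index
      = (normalizer (P.map N.subtype : Set G)).relIndex N :=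
        index_eq_relIndex_of_sup_eq_top P.normalizer_sup_eq_top
    _ ∣ (P.map N.subtype).relIndex N := relIndex_dvd_of_le_left N le_normalizer
    _ = (P : Subgroup N).index := by
        rw [relIndex, subgroupOf, comap_map_eq_self_of_injective N.subtype_injective]

end Index

section Hall

variable {G : Type*} [Group G] {ρ : Set ℕ}

theorem isHallSubgroup_top (h : IsPiNumber ρ (Nat.card G)) : IsHallSubgroup ρ (⊤ : Subgroup G) :=
  ⟨by rwa [card_top], by rw [index_top]; exact isPiNumber_one⟩

theorem IsHallSubgroup.map_subtype {M : Subgroup G} {H : Subgroup M}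
    (hH : IsHallSubgroup ρ H) (hM : IsPiNumber ρᶜ M.index) :
    IsHallSubgroup ρ (H.map M.subtype) := by
  refine ⟨?_, ?_⟩
  · rw [card_map_of_injective M.subtype_injective]
    exact hH.1
  · rw [index_map_subtype]
    exact IsPiNumber.mul hH.2 hM

theorem IsHallSubgroup.comap_mk' {N : Subgroup G} [N.Normal] {K : Subgroup (G ⧸ N)}
    (hK : IsHallSubgroup ρ K) (hN : IsPiNumber ρ (Nat.card N)) :
    IsHallSubgroup ρ (K.comap (QuotientGroup.mk' N)) := by
  refine ⟨?_, ?_⟩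
  · rw [show Nat.card (K.comap (QuotientGroup.mk' N)) = Nat.card N * Nat.card K from
      QuotientGroup.card_preimage_mk N K]
    exact hN.mul hK.1
  · rw [index_comap_of_surjective _ (QuotientGroup.mk'_surjective N)]
    exact hK.2

/-- By Schur–Zassenhaus, `N` has a complement in the preimage of `K`. -/
theorem IsHallSubgroup.exists_of_quotient_of_isPiNumber_compl [Finite G] {N : Subgroup G}
    [N.Normal] {K : Subgroup (G ⧸ N)} (hK : IsHallSubgroup ρ K)
    (hN : IsPiNumber ρᶜ (Nat.card N)) : ∃ H : Subgroup G, IsHallSubgroup ρ H := by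
  set L := K.comap (QuotientGroup.mk' N)
  have hNL : N ≤ L := fun x hx => by simp [L, (QuotientGroup.eq_one_iff x).mpr hx]
  have hcardL : Nat.card L = Nat.card N * Nat.card K := QuotientGroup.card_preimage_mk N K
  have hcardN : Nat.card (N.subgroupOf L) = Nat.card N :=
    Nat.card_congr (subgroupOfEquivOfLe hNL).toEquiv
  have hindexN : (N.subgroupOf L).index = Nat.card K := by
    have := (N.subgroupOf L).card_mul_index
    rw [hcardN, hcardL] at this
    exact Nat.eq_of_mul_eq_mul_left Nat.card_pos this
  obtain ⟨C, hC⟩ := exists_right_complement'_of_coprime (N := N.subgroupOf L)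
    (by rw [hcardN, hindexN]; exact IsPiNumber.coprime_of_compl hK.1 hN)
  have hcardC : Nat.card C = Nat.card K := by
    have := hC.card_mul_card
    rw [hcardN, hcardL] at this
    exact Nat.eq_of_mul_eq_mul_left Nat.card_pos this
  have hindexC : C.index = Nat.card N := by
    have := C.card_mul_index
    rw [hcardC, hcardL, mul_comm (Nat.card N)] at this
    exact Nat.eq_of_mul_eq_mul_left Nat.card_pos this
  refine ⟨C.map L.subtype, IsHallSubgroup.map_subtype ⟨hcardC ▸ hK.1, hindexC ▸ hN⟩ ?_⟩
  rw [index_comap_of_surjective _ (QuotientGroup.mk'_surjective N)]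
  exact hK.2

end Hall

def HasNormalSeriesWithFactorOrders (P : ℕ → Prop) (G : Type*) [Group G] : Prop :=
  ∃ (n : ℕ) (c : Fin (n + 1) → Subgroup G),
    c 0 = ⊥ ∧ c (Fin.last n) = ⊤ ∧ Monotone c ∧ (∀ k, (c k).Normal) ∧
    ∀ k : Fin n, P ((c k.castSucc).relIndex (c k.succ))

namespace HasNormalSeriesWithFactorOrders

variable {P Q : ℕ → Prop} {G : Type*} [Group G]

theorem mono (h : HasNormalSeriesWithFactorOrders P G)
    (hPQ : ∀ m, m ∣ Nat.card G → P m → Q m) : HasNormalSeriesWithFactorOrders Q G := by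
  obtain ⟨n, c, h0, hlast, hmono, hnormal, hfactor⟩ := h
  exact ⟨n, c, h0, hlast, hmono, hnormal, fun k =>
    hPQ _ ((relIndex_dvd_card _ _).trans (card_subgroup_dvd_card _)) (hfactor k)⟩

theorem subgroup (h : HasNormalSeriesWithFactorOrders P G) (hP : ∀ {m n}, m ∣ n → P n → P m)
    (M : Subgroup G) : HasNormalSeriesWithFactorOrders P M := by
  obtain ⟨n, c, h0, hlast, hmono, hnormal, hfactor⟩ := h
  refine ⟨n, fun k => (c k).subgroupOf M, by simp [h0], by simp [hlast],
    fun a b hab => comap_mono (hmono hab), fun k => (hnormal k).subgroupOf M,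
    fun k => hP ?_ (hfactor k)⟩
  have := hnormal k.castSucc
  change ((c k.castSucc).comap M.subtype).relIndex _ ∣ _
  rw [relIndex_comap, subgroupOf_map_subtype]
  exact relIndex_dvd_relIndex_of_le_of_normal _ inf_le_left

theorem map (h : HasNormalSeriesWithFactorOrders P G) (hP : ∀ {m n}, m ∣ n → P n → P m)
    {H : Type*} [Group H] {f : G →* H} (hf : Function.Surjective f) :
    HasNormalSeriesWithFactorOrders P H := by
  obtain ⟨n, c, h0, hlast, hmono, hnormal, hfactor⟩ := h
  refine ⟨n, fun k => (c k).map f, by simp [h0], by simp [hlast, map_top_of_surjective f hf],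
    fun a b hab => map_mono (hmono hab), fun k => (hnormal k).map f hf,
    fun k => hP (relIndex_map_dvd f _ _) (hfactor k)⟩

theorem exists_normal_ne_bot [Nontrivial G] (h : HasNormalSeriesWithFactorOrders P G) :
    ∃ N : Subgroup G, N.Normal ∧ N ≠ ⊥ ∧ P (Nat.card N) := by
  obtain ⟨n, c, h0, hlast, -, hnormal, hfactor⟩ := h
  obtain ⟨k, hk, hmin⟩ := WellFounded.has_min wellFounded_lt {k | c k ≠ ⊥}
    ⟨Fin.last n, by simp [hlast]⟩
  obtain ⟨j, rfl⟩ := Fin.exists_succ_eq.mpr (fun hk0 : k = 0 => hk (hk0 ▸ h0))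
  have hj : c j.castSucc = ⊥ := by
    by_contra hj
    exact hmin _ hj Fin.castSucc_lt_succ
  refine ⟨c j.succ, hnormal _, hk, ?_⟩
  simpa [hj] using hfactor j

end HasNormalSeriesWithFactorOrders

/-- Induction on `|G|` over a minimal normal subgroup `N` of the series: a `ρ`-group `N` is
absorbed into the preimage of a Hall subgroup of `G ⧸ N`, a `ρ'`-group `N` is complemented by
Schur–Zassenhaus, and otherwise `N` has a unique prime `q ∈ ρ`, whose Sylow subgroup `Q` is either
normal in `G` or has a proper normalizer of `ρ'`-index by the Frattini argument. -/
theorem exists_isHallSubgroup_of_hasNormalSeries {ρ : Set ℕ} {G : Type*} [Group G] [Finite G]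
    (h : HasNormalSeriesWithFactorOrders (IsPiNumberOrHasAtMostOnePiPrime ρ) G) :
    ∃ H : Subgroup G, IsHallSubgroup ρ H := by
  induction hcard : Nat.card G using Nat.strong_induction_on generalizing G with
  | _ n ih =>
  subst hcard
  have hquot (N : Subgroup G) [N.Normal] (hN : N ≠ ⊥) :
      ∃ K : Subgroup (G ⧸ N), IsHallSubgroup ρ K := by
    refine ih _ ?_ (h.map (fun hmn hn => hn.of_dvd hmn) (QuotientGroup.mk'_surjective N)) rfl
    rw [← index_eq_card, ← N.index_mul_card]
    exact lt_mul_of_one_lt_right (Nat.pos_of_ne_zero index_ne_zero_of_finite)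
      (N.one_lt_card_iff_ne_bot.mpr hN)
  rcases subsingleton_or_nontrivial G with hG | hG
  · exact ⟨⊤, isHallSubgroup_top (by rw [Nat.card_of_subsingleton (1 : G)]; exact isPiNumber_one)⟩
  obtain ⟨N, hNnormal, hN, hNρ⟩ := h.exists_normal_ne_bot
  obtain ⟨K, hK⟩ := hquot N hN
  rcases hNρ with hNρ | hNρ
  · exact ⟨_, hK.comap_mk' hNρ⟩
  by_cases hNρ' : IsPiNumber ρᶜ (Nat.card N)
  · exact hK.exists_of_quotient_of_isPiNumber_compl hNρ'
  obtain ⟨q, hq, hqN, hqρ⟩ : ∃ q, q.Prime ∧ q ∣ Nat.card N ∧ q ∈ ρ := by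
    simpa [IsPiNumber] using hNρ'
  have := Fact.mk hq
  obtain ⟨Q⟩ : Nonempty (Sylow q N) := inferInstance
  by_cases hQ : normalizer (Q.map N.subtype : Set G) = ⊤
  · have := normalizer_eq_top_iff.mp hQ
    obtain ⟨K, hK⟩ := hquot _ ((map_eq_bot_iff_of_injective _ N.subtype_injective).not.mpr
      (Q.ne_bot_of_dvd_card hqN))
    refine ⟨_, hK.comap_mk' ?_⟩
    rw [card_map_of_injective N.subtype_injective]
    exact Q.isPGroup'.isPiNumber_card hqρ
  obtain ⟨H, hH⟩ := ih _ ((card_le_card_group _).lt_of_ne (mt (card_eq_iff_eq_top _).mp hQ))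
    (h.subgroup (fun hmn hn => hn.of_dvd hmn) _) rfl
  refine ⟨_, hH.map_subtype fun p hp hpQ hpρ => ?_⟩
  have hpQ := hpQ.trans Q.index_normalizer_map_dvd_index
  obtain rfl : p = q := hNρ ⟨hp, hpQ.trans (index_dvd_card _), hpρ⟩ ⟨hq, hqN, hqρ⟩
  exact Q.not_dvd_index hpQ

theorem exists_isHallSubgroup_of_sigmaSoluble_supplements {ι : Type*} {σ : ι → Set ℕ}
    {G : Type*} [Group G] [Finite G] {ρ : Set ℕ}
    (hsupp : ∀ p : ℕ, p.Prime → p ∣ Nat.card G →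
      ∀ (P : Sylow p G) (V : Subgroup G), V < ↑P →
        (∀ W : Subgroup G, V < W → W ≤ ↑P → W = ↑P) →
        ∃ T : Subgroup G, (V : Set G) * (T : Set G) = Set.univ ∧ SigmaSoluble σ ↥T)
    (hρ : ∀ i, σ i ∩ {p : ℕ | p.Prime ∧ p ∣ Nat.card G} ⊆ ρ ∨
      (σ i ∩ {p : ℕ | p.Prime ∧ p ∣ Nat.card G} ∩ ρ).Subsingleton) :
    ∃ H : Subgroup G, IsHallSubgroup ρ H := by
  by_cases hG : IsPiNumber ρ (Nat.card G)
  · exact ⟨⊤, isHallSubgroup_top hG⟩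
  obtain ⟨r, hr, hrG, hrρ⟩ : ∃ r, r.Prime ∧ r ∣ Nat.card G ∧ r ∉ ρ := by
    simpa [IsPiNumber] using hG
  have := Fact.mk hr
  obtain ⟨P⟩ : Nonempty (Sylow r G) := inferInstance
  obtain ⟨V, -, hVP⟩ := exists_le_covBy_of_lt (bot_lt_iff_ne_bot.mpr (P.ne_bot_of_dvd_card hrG))
  obtain ⟨T, hVT, hT⟩ :=
    hsupp r hr hrG P V hVP.lt fun W hVW hWP => hWP.eq_of_not_lt (hVP.2 hVW)
  have hTindex : IsPiNumber ρᶜ T.index := by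
    rw [index_eq_relIndex_of_mul_eq_univ hVT]
    exact (P.isPGroup'.isPiNumber_card hrρ).of_dvd
      ((relIndex_dvd_card _ _).trans (card_dvd_of_le hVP.le))
  have hTseries : HasNormalSeriesWithFactorOrders (IsPiNumberOrHasAtMostOnePiPrime ρ) T :=
    HasNormalSeriesWithFactorOrders.mono (P := fun m => ∃ i, IsPiNumber (σ i) m) hT
      fun m hm ⟨i, hi⟩ => IsPiNumber.isPiNumberOrHasAtMostOnePiPrime
        (S := σ i ∩ {p : ℕ | p.Prime ∧ p ∣ Nat.card G})
        (fun p hp hpm => ⟨hi p hp hpm, hp, hpm.trans (hm.trans (card_subgroup_dvd_card T))⟩)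
        (hρ i)
  obtain ⟨H, hH⟩ := exists_isHallSubgroup_of_hasNormalSeries hTseries
  exact ⟨_, hH.map_subtype hTindex⟩

section Classes

variable {ι : Type*} {σ : ι → Set ℕ} {S ρ : Set ℕ} {i₁ : ι}

theorem forall_inter_subset_or_subsingleton_of_diff
    (hσ : Pairwise fun i j => Disjoint (σ i) (σ j)) (hπ : σ i₁ ∩ S ⊆ ρ)
    (hρ : (ρ \ σ i₁).Subsingleton) :
    ∀ i, σ i ∩ S ⊆ ρ ∨ (σ i ∩ S ∩ ρ).Subsingleton := by
  intro i
  obtain rfl | hi := eq_or_ne i i₁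
  · exact Or.inl hπ
  · exact Or.inr (hρ.anti fun p ⟨⟨hpi, _⟩, hpρ⟩ => ⟨hpρ, Set.disjoint_left.mp (hσ hi) hpi⟩)

theorem forall_inter_subset_or_subsingleton_of_inter
    (hσ : Pairwise fun i j => Disjoint (σ i) (σ j)) (hπ : (σ i₁ ∩ S ∩ ρ).Subsingleton)
    (hρ : ∀ p ∈ S, p ∉ σ i₁ → p ∈ ρ) :
    ∀ i, σ i ∩ S ⊆ ρ ∨ (σ i ∩ S ∩ ρ).Subsingleton := by
  intro i
  obtain rfl | hi := eq_or_ne i i₁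
  · exact Or.inr hπ
  · exact Or.inl fun p ⟨hpi, hpS⟩ => hρ p hpS (Set.disjoint_left.mp (hσ hi) hpi)

end Classes

theorem hall_subgroups_of_supplements_general {ι : Type*} (σ : ι → Set ℕ)
    (hσ : SigmaPartition σ) (G : Type*) [Group G] [Finite G]
    (i₁ i₂ : ι)
    (hsupp : ∀ p : ℕ, p.Prime → p ∣ Nat.card G →
      ∀ (P : Sylow p G) (V : Subgroup G), V < ↑P →
        (∀ W : Subgroup G, V < W → W ≤ ↑P → W = ↑P) →
        ∃ T : Subgroup G, (V : Set G) * (T : Set G) = Set.univ ∧ SigmaSoluble σ ↥T) :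
    (∃ H : Subgroup G,
      IsHallSubgroup (σ i₁ ∩ {p : ℕ | p.Prime ∧ p ∣ Nat.card G}) H) ∧
    (∃ H : Subgroup G,
      IsHallSubgroup {p : ℕ | p.Prime ∧ p ∉ σ i₁ ∩ {p : ℕ | p.Prime ∧ p ∣ Nat.card G}} H) ∧
    (∀ p : ℕ, p.Prime → p ∈ σ i₂ → p ∣ Nat.card G →
      ∃ H : Subgroup G,
        IsHallSubgroup ((σ i₁ ∩ {r : ℕ | r.Prime ∧ r ∣ Nat.card G}) ∪ {p}) H) ∧
    (∀ q : ℕ, q ∈ σ i₁ ∩ {r : ℕ | r.Prime ∧ r ∣ Nat.card G} →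
      ∃ H : Subgroup G,
        IsHallSubgroup
          ({r : ℕ | r.Prime ∧ r ∉ σ i₁ ∩ {s : ℕ | s.Prime ∧ s ∣ Nat.card G}} ∪ {q}) H) := by
  have hdisj := hσ.2.1
  refine ⟨?_, ?_, fun p _ _ _ => ?_, fun q _ => ?_⟩ <;>
    refine exists_isHallSubgroup_of_sigmaSoluble_supplements hsupp ?_
  · exact forall_inter_subset_or_subsingleton_of_diff hdisj subset_rfl
      fun p hp => (hp.2 hp.1.1).elim
  · exact forall_inter_subset_or_subsingleton_of_inter hdisj (fun p hp => (hp.2.2 hp.1).elim)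
      fun p hpS hp => ⟨hpS.1, fun h => hp h.1⟩
  · exact forall_inter_subset_or_subsingleton_of_diff hdisj Set.subset_union_left
      (Set.subsingleton_singleton.anti fun r ⟨hr, hr'⟩ => hr.resolve_left fun h => hr' h.1)
  · exact forall_inter_subset_or_subsingleton_of_inter hdisj
      (Set.subsingleton_singleton.anti fun r ⟨hr, hr'⟩ => hr'.resolve_left fun h => h.2 hr)
      fun p hpS hp => Or.inl ⟨hpS.1, fun h => hp h.1⟩

/-- The Hall-subgroup existence established in the final part of the proof of
Theorem A(i): if exactly two classes `σ i₁`, `σ i₂` of `σ` meet `π(G)`,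
`π := σ i₁ ∩ π(G)`, and every maximal subgroup of every Sylow subgroup of `G` has a
`σ`-soluble supplement in `G`, then `G` has a Hall `π`-subgroup, a Hall
`π'`-subgroup, a Hall `(π ∪ {p})`-subgroup for every prime `p ∈ σ i₂ ∩ π(G)`, and a
Hall `(π' ∪ {q})`-subgroup for every prime `q ∈ π`. -/
theorem hall_subgroups_of_supplements {ι : Type*} (σ : ι → Set ℕ)
    (hσ : SigmaPartition σ) (G : Type*) [Group G] [Finite G]
    (i₁ i₂ : ι) (hne : i₁ ≠ i₂)
    (h₁ : ∃ p : ℕ, p.Prime ∧ p ∈ σ i₁ ∧ p ∣ Nat.card G)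
    (h₂ : ∃ p : ℕ, p.Prime ∧ p ∈ σ i₂ ∧ p ∣ Nat.card G)
    (honly : ∀ i, (∃ p : ℕ, p.Prime ∧ p ∈ σ i ∧ p ∣ Nat.card G) → i = i₁ ∨ i = i₂)
    (hsupp : ∀ p : ℕ, p.Prime → p ∣ Nat.card G →
      ∀ (P : Sylow p G) (V : Subgroup G), V < ↑P →
        (∀ W : Subgroup G, V < W → W ≤ ↑P → W = ↑P) →
        ∃ T : Subgroup G, (V : Set G) * (T : Set G) = Set.univ ∧ SigmaSoluble σ ↥T) :
    (∃ H : Subgroup G,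
      IsHallSubgroup (σ i₁ ∩ {p : ℕ | p.Prime ∧ p ∣ Nat.card G}) H) ∧
    (∃ H : Subgroup G,
      IsHallSubgroup {p : ℕ | p.Prime ∧ p ∉ σ i₁ ∩ {p : ℕ | p.Prime ∧ p ∣ Nat.card G}} H) ∧
    (∀ p : ℕ, p.Prime → p ∈ σ i₂ → p ∣ Nat.card G →
      ∃ H : Subgroup G,
        IsHallSubgroup ((σ i₁ ∩ {r : ℕ | r.Prime ∧ r ∣ Nat.card G}) ∪ {p}) H) ∧
    (∀ q : ℕ, q ∈ σ i₁ ∩ {r : ℕ | r.Prime ∧ r ∣ Nat.card G} →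
      ∃ H : Subgroup G,
        IsHallSubgroup
          ({r : ℕ | r.Prime ∧ r ∉ σ i₁ ∩ {s : ℕ | s.Prime ∧ s ∣ Nat.card G}} ∪ {q}) H) :=
  hall_subgroups_of_supplements_general σ hσ G i₁ i₂ hsupp
end
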